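/- arXiv:1905.01289 — 2 statements merged into one kernel-verified Lean document; each statement's English description precedes it below -/
import Mathlib

section
/- (Composition of convolutions) Given a convolution with basis A' : ⟨K',M,N⟩ and parameter Θ' : ⟨K',P,Q⟩, and a convolution with basis A'' : ⟨K'',N,R⟩ and parameter Θ'' : ⟨K'',Q,S⟩, their composition (apply the first, then the second) is the convolution of size K = K'K'' whose basis and parameter slices, indexed by pairs (k',k''), are A'_{k'} A''_{k''} and Θ'_{k'} Θ''_{k''} respectively; i.e., Σ_{k''} A''_{k''}ᵀ (Σ_{k'} A'_{k'}ᵀ x Θ'_{k'}) Θ''_{k''} = Σ_{k',k''} (A'_{k'} A''_{k''})ᵀ x (Θ'_{k'} Θ''_{k''}) for all x of shape M×P. -/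
open Matrix

/-- Composition of convolutions: composing a convolution with basis `A'`,
parameter `Θ'` and one with basis `A''`, parameter `Θ''` yields the convolution
of size `K'K''` with basis slices `A'_{k'} A''_{k''}` and parameter slices
`Θ'_{k'} Θ''_{k''}`. -/
theorem convolution_comp {K' K'' M N R P Q S : ℕ}
    (A' : Fin K' → Matrix (Fin M) (Fin N) ℝ)
    (Θ' : Fin K' → Matrix (Fin P) (Fin Q) ℝ)
    (A'' : Fin K'' → Matrix (Fin N) (Fin R) ℝ)
    (Θ'' : Fin K'' → Matrix (Fin Q) (Fin S) ℝ)
    (x : Matrix (Fin M) (Fin P) ℝ) :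
    ∑ k'', (A'' k'')ᵀ * (∑ k', (A' k')ᵀ * x * Θ' k') * Θ'' k'' =
      ∑ k', ∑ k'', (A' k' * A'' k'')ᵀ * x * (Θ' k' * Θ'' k'') := by
  rw [Finset.sum_comm]
  refine Finset.sum_congr rfl fun k'' _ => ?_
  rw [Matrix.mul_sum, Matrix.sum_mul]
  refine Finset.sum_congr rfl fun k' _ => ?_
  rw [Matrix.transpose_mul]
  simp only [Matrix.mul_assoc]
end

section
/- A linear transform given by a tensor Φ of shape ⟨N,N,P,Q⟩ (acting on a 1-D grid of size N) is translation equivariant — meaning Φ_{m n p q} = Φ_{m' n' p q} whenever n − m = n' − m' — if and only if Φ = Σ_{d ∈ D} 𝒜_d ⊗ Θ_d for some matrices Θ_d of shape P×Q indexed by the realizable differences d ∈ D = {−(N−1),…,N−1}, where (𝒜_d)_{mn} = 𝕀[n − m = d]. -/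
lemma shift_sum_eval {N : ℕ} (m n : Fin N) (f : ℤ → ℝ) :
    ∑ d ∈ Finset.Icc (-((N : ℤ) - 1)) ((N : ℤ) - 1),
      (if (n : ℤ) - (m : ℤ) = d then (1 : ℝ) else 0) * f d = f ((n : ℤ) - m) := by
  have hm := m.isLt
  have hn := n.isLt
  have hmem : (n : ℤ) - (m : ℤ) ∈ Finset.Icc (-((N : ℤ) - 1)) ((N : ℤ) - 1) := by
    simp only [Finset.mem_Icc]; omega
  rw [Finset.sum_eq_single_of_mem _ hmem]
  · simp
  · intro d _ hd
    simp [Ne.symm hd]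

/-- A linear transform `Φ : ⟨N,N,P,Q⟩` on a 1-D grid of size `N` is translation
equivariant iff it is a sum `Σ_{d ∈ D} 𝒜_d ⊗ Θ_d` over the realizable
differences `D = {−(N−1),…,N−1}`, where `(𝒜_d)_{mn} = 𝕀[n − m = d]`. -/
theorem translation_equivariant_iff_shift_decomposition {N P Q : ℕ}
    (Φ : Fin N → Fin N → Fin P → Fin Q → ℝ) :
    (∀ (m n m' n' : Fin N) (p : Fin P) (q : Fin Q),
        (n : ℤ) - (m : ℤ) = (n' : ℤ) - (m' : ℤ) → Φ m n p q = Φ m' n' p q) ↔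
      ∃ Θ : ℤ → Matrix (Fin P) (Fin Q) ℝ,
        ∀ (m n : Fin N) (p : Fin P) (q : Fin Q), Φ m n p q =
          ∑ d ∈ Finset.Icc (-((N : ℤ) - 1)) ((N : ℤ) - 1),
            (if (n : ℤ) - (m : ℤ) = d then (1 : ℝ) else 0) * Θ d p q := by
  constructor
  · intro h
    classical
    refine ⟨fun d p q =>
      if hd : ∃ mn : Fin N × Fin N, (mn.2 : ℤ) - (mn.1 : ℤ) = d then
        Φ hd.choose.1 hd.choose.2 p q else 0, fun m n p q => ?_⟩
    rw [shift_sum_eval]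
    have hd : ∃ mn : Fin N × Fin N, (mn.2 : ℤ) - (mn.1 : ℤ) = ((n : ℤ) - m) := ⟨(m, n), rfl⟩
    simp only [hd, dif_pos]
    exact h m n hd.choose.1 hd.choose.2 p q hd.choose_spec.symm
  · rintro ⟨Θ, hΘ⟩ m n m' n' p q hdiff
    rw [hΘ m n p q, hΘ m' n' p q, shift_sum_eval, shift_sum_eval, hdiff]
end
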